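/- arXiv:1708.03578 — 8 statements merged into one kernel-verified Lean document; each statement's English description precedes it below -/
import Mathlib

section
/- Let u, v ∈ 𝓢(ℝ,ℂ) with ∫ conj(u(x)) v(x) dx = 1, and let α, β ∈ ℂ satisfy α + β + αβ = 0. For x₀ ∈ ℝ define the tempered distribution η_{x₀} : 𝓢(ℝ,ℂ) → ℂ by η_{x₀}(φ) = φ(x₀) + conj(α) u(x₀) ∫ conj(v(x)) φ(x) dx (i.e., η_{x₀} = T ξ_{x₀} for T = 1 + α P_{u,v}). Define q̂† φ = B(q̂₀(A φ)), where (A φ)(x) = φ(x) + conj(α) (∫ conj(v)φ) u(x), (B ψ)(x) = ψ(x) + conj(β) (∫ conj(v)ψ) u(x), and (q̂₀ ψ)(x) = x ψ(x). Then for every φ ∈ 𝓢(ℝ,ℂ): η_{x₀}(q̂† φ) = x₀ · η_{x₀}(φ). (This is the eigenvalue equation q̂ η_{x₀} = x₀ η_{x₀} for q̂ = T q̂₀ T⁻¹, tested against φ.) -/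
/-!
Write `⟨v, ψ⟩ = ∫ conj v · ψ`, so that `⟨v, u⟩ = 1`. The map `B = (T⁻¹)†` rescales the pairing:
`⟨v, B ψ⟩ = (1 + conj β) ⟨v, ψ⟩`, and since `conj α + conj β + conj α conj β = 0` this gives
`η_{x₀}(B ψ) = ψ(x₀)`, i.e. `η_{x₀} ∘ (T⁻¹)† = ξ_{x₀}`. Applied to `ψ = q̂₀ (A φ)` the right
side is `x₀ (A φ)(x₀) = x₀ η_{x₀}(φ)`.
-/

open MeasureTheory ComplexConjugate

namespace SchwartzMap

variable {D : Type*} [NormedAddCommGroup D] [NormedSpace ℝ D] [MeasurableSpace D] [BorelSpace D]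
  [SecondCountableTopology D] {μ : Measure D} [μ.HasTemperateGrowth]

theorem integrable_conj_mul (v f : 𝓢(D, ℂ)) : Integrable (fun x ↦ conj (v x) * f x) μ :=
  f.integrable.mul_of_top_right (v.memLp ⊤ μ).star

theorem integral_conj_mul_add_mul (v f g : 𝓢(D, ℂ)) (c : ℂ) :
    ∫ x, conj (v x) * (f x + c * g x) ∂μ
      = ∫ x, conj (v x) * f x ∂μ + c * ∫ x, conj (v x) * g x ∂μ := by
  simp_rw [mul_add, mul_left_comm _ c]
  rw [integral_add (integrable_conj_mul v f) ((integrable_conj_mul v g).const_mul c),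
    integral_const_mul]

theorem eval_add_mul_integral_conj_mul_of_inverse_adjoint (u v ψ ψ' : 𝓢(D, ℂ))
    (huv : ∫ x, conj (u x) * v x ∂μ = 1) {α β : ℂ} (hαβ : α + β + α * β = 0) (x₀ : D)
    (hψ' : ∀ x, ψ' x = ψ x + conj β * (∫ t, conj (v t) * ψ t ∂μ) * u x) :
    ψ' x₀ + conj α * u x₀ * ∫ x, conj (v x) * ψ' x ∂μ = ψ x₀ := by
  have hvu : ∫ x, conj (v x) * u x ∂μ = 1 := by
    calc ∫ x, conj (v x) * u x ∂μ = ∫ x, conj (conj (u x) * v x) ∂μ := by simp [mul_comm]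
      _ = 1 := by rw [integral_conj, huv, map_one]
  have hαβ_conj : conj α + conj β + conj α * conj β = 0 := by simpa using congrArg conj hαβ
  have hpairing : ∫ x, conj (v x) * ψ' x ∂μ = (1 + conj β) * ∫ x, conj (v x) * ψ x ∂μ := by
    simp_rw [hψ']
    rw [integral_conj_mul_add_mul, hvu]
    ring
  rw [hpairing, hψ']
  linear_combination (u x₀ * ∫ x, conj (v x) * ψ x ∂μ) * hαβ_conj

end SchwartzMap

/-- First example: for `T = 1 + α P_{u,v}` with `⟨u,v⟩ = 1` and `α + β + αβ = 0`, the
tempered distribution `η_{x₀} = T ξ_{x₀}`, acting as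
`η_{x₀}(φ) = φ(x₀) + conj(α) u(x₀) ⟨v, φ⟩`, satisfies the eigenvalue equation
`η_{x₀}(q̂† φ) = x₀ η_{x₀}(φ)` where `q̂† φ = (T⁻¹)†(q̂₀(T† φ)) = B (q̂₀ (A φ))`. -/
theorem statement8
    (u v : SchwartzMap ℝ ℂ)
    (huv : ∫ x : ℝ, (starRingEnd ℂ) (u x) * v x = 1)
    (α β : ℂ) (hαβ : α + β + α * β = 0) (x₀ : ℝ)
    (A B : SchwartzMap ℝ ℂ → SchwartzMap ℝ ℂ)
    (hA : ∀ (φ : SchwartzMap ℝ ℂ) (x : ℝ),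
      A φ x = φ x + (starRingEnd ℂ) α * (∫ t : ℝ, (starRingEnd ℂ) (v t) * φ t) * u x)
    (hB : ∀ (ψ : SchwartzMap ℝ ℂ) (x : ℝ),
      B ψ x = ψ x + (starRingEnd ℂ) β * (∫ t : ℝ, (starRingEnd ℂ) (v t) * ψ t) * u x)
    (Q : SchwartzMap ℝ ℂ → SchwartzMap ℝ ℂ)
    (hQ : ∀ (ψ : SchwartzMap ℝ ℂ) (x : ℝ), Q ψ x = (x : ℂ) * ψ x) :
    ∀ φ : SchwartzMap ℝ ℂ,
      B (Q (A φ)) x₀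
          + (starRingEnd ℂ) α * u x₀ * ∫ x : ℝ, (starRingEnd ℂ) (v x) * B (Q (A φ)) x
        = (x₀ : ℂ) *
          (φ x₀ + (starRingEnd ℂ) α * u x₀ * ∫ x : ℝ, (starRingEnd ℂ) (v x) * φ x) := by
  intro φ
  calc _ = Q (A φ) x₀ :=
        SchwartzMap.eval_add_mul_integral_conj_mul_of_inverse_adjoint u v _ _ huv hαβ x₀ (hB _)
    _ = x₀ * A φ x₀ := hQ _ _
    _ = _ := by rw [hA]; ring
end

section
/- Let H be a complex inner product space, let u, v ∈ H with ⟨u, v⟩ = 1, let α, β ∈ ℂ satisfy α + β + αβ = 0, and let (e_n) be an orthonormal family in H. Define φ_n = e_n + α ⟨u, e_n⟩ v and Ψ_n = e_n + conj(β) ⟨v, e_n⟩ u. Then the families (φ_n) and (Ψ_n) are biorthonormal: ⟨φ_n, Ψ_m⟩ = δ_{n,m} for all n, m. -/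
open scoped InnerProductSpace

/-- For `T = 1 + α P_{u,v}` with `⟨u,v⟩ = 1` and `α + β + αβ = 0`, and an orthonormal
family `(e_n)`, the families `φ_n = T e_n = e_n + α⟨u,e_n⟩v` and
`Ψ_n = (T⁻¹)† e_n = e_n + conj(β)⟨v,e_n⟩u` are biorthonormal: `⟨φ_n, Ψ_m⟩ = δ_{n,m}`. -/
theorem statement10 {H : Type*} [NormedAddCommGroup H] [InnerProductSpace ℂ H]
    (u v : H) (huv : ⟪u, v⟫_ℂ = 1) (α β : ℂ) (hαβ : α + β + α * β = 0)
    {ι : Type*} [DecidableEq ι] (e : ι → H) (he : Orthonormal ℂ e) :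
    ∀ n m : ι,
      ⟪e n + α • ⟪u, e n⟫_ℂ • v, e m + (starRingEnd ℂ) β • ⟪v, e m⟫_ℂ • u⟫_ℂ
        = if n = m then 1 else 0 := by
  intro n m
  have hvu : ⟪v, u⟫_ℂ = 1 := by
    rw [← inner_conj_symm, huv]; simp
  have h0 : (starRingEnd ℂ) α + (starRingEnd ℂ) β + (starRingEnd ℂ) α * (starRingEnd ℂ) β = 0 := by
    have := congrArg (starRingEnd ℂ) hαβ
    simpa using this
  rw [orthonormal_iff_ite] at he
  simp only [inner_add_left, inner_add_right, inner_smul_left, inner_smul_right, he, hvu,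
    ← inner_conj_symm (e n) u]
  ring_nf
  linear_combination (starRingEnd ℂ) ⟪u, e n⟫_ℂ * ⟪v, e m⟫_ℂ * h0
end

section
/- Let λ = (√2/2)(1 + i) and c = i/(√2 (1 + i)). Then for every φ ∈ 𝓢(ℝ,ℂ): ∫_ℝ c e^{-λ |x|} (φ(x) + i φ''(x)) dx = φ(0). (That is, G(x) = c e^{-λ|x|} is the Green's function of the operator T⁻¹ = 1 - i p̂₀² = 1 + i d²/dx²: one has (T⁻¹ G)(x) = δ(x) in the sense of distributions.) -/
open MeasureTheory Set Filter Topology Complex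

/-! For `Re λ > 0`, on `(0, ∞)` the function `e^{-λx}(φ' + λφ)` is a primitive of
`e^{-λx}(φ'' - λ²φ)` that vanishes at infinity, so `∫₀^∞ e^{-λx}(φ'' - λ²φ) = -(φ'(0) + λφ(0))`.
Applying this also to `x ↦ φ(-x)` covers the negative half-line, and the `φ'(0)` terms cancel:
`∫ e^{-λ|x|}(φ'' - λ²φ) = -2λφ(0)`. For the given constants `λ² = i`, so the integrand of the
theorem is `c i e^{-λ|x|}(φ'' - λ²φ)`, and `-2iλc = 1`. -/

section ExpDecay

variable {l : ℂ}

theorem tendsto_cexp_neg_mul_mul_atTop_zero (hl : 0 < l.re) {g : ℝ → ℂ} {C : ℝ}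
    (hg : ∀ x, ‖g x‖ ≤ C) : Tendsto (fun x : ℝ => cexp (-l * x) * g x) atTop (𝓝 0) := by
  have hexp : Tendsto (fun x : ℝ => cexp (-l * x)) atTop (𝓝 0) := by
    simpa [Complex.tendsto_exp_nhds_zero_iff] using
      tendsto_const_nhds.neg_mul_atTop (neg_lt_zero.mpr hl) tendsto_id
  exact hexp.zero_mul_isBoundedUnder_le (isBoundedUnder_of ⟨C, hg⟩)

theorem integrableOn_Ioi_cexp_neg_mul_mul (hl : 0 < l.re) {g : ℝ → ℂ} {C : ℝ}
    (hg_cont : Continuous g) (hg : ∀ x, ‖g x‖ ≤ C) (a : ℝ) :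
    IntegrableOn (fun x : ℝ => cexp (-l * x) * g x) (Ioi a) :=
  (integrableOn_exp_mul_complex_Ioi (by simpa using hl) a).mul_bdd
    hg_cont.aestronglyMeasurable (ae_of_all _ hg)

end ExpDecay

theorem integral_eq_integral_Ioi_add_integral_Ioi_comp_neg {E : Type*} [NormedAddCommGroup E]
    [NormedSpace ℝ E] {f : ℝ → E} (hpos : IntegrableOn f (Ioi 0))
    (hneg : IntegrableOn (fun x => f (-x)) (Ioi 0)) :
    ∫ x, f x = (∫ x in Ioi 0, f x) + ∫ x in Ioi 0, f (-x) := by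
  have hIic : IntegrableOn f (Iic 0) := by
    have h : IntegrableOn (fun x => f (-x)) (Ici (-0)) := by
      rw [neg_zero]; exact Iff.mpr integrableOn_Ici_iff_integrableOn_Ioi hneg
    simpa only [neg_neg] using h.comp_neg_Iic
  rw [← intervalIntegral.integral_Iic_add_Ioi hIic hpos, integral_comp_neg_Ioi, neg_zero, add_comm]

section GreenFunction

variable {l : ℂ} {φ φ' φ'' : ℝ → ℂ} {C₀ C₁ C₂ : ℝ}

theorem integrableOn_Ioi_cexp_neg_mul_mul_sub (hl : 0 < l.re) (hφ_cont : Continuous φ)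
    (hφ''_cont : Continuous φ'') (h₀ : ∀ x, ‖φ x‖ ≤ C₀) (h₂ : ∀ x, ‖φ'' x‖ ≤ C₂) :
    IntegrableOn (fun x : ℝ => cexp (-l * x) * (φ'' x - l ^ 2 * φ x)) (Ioi 0) :=
  integrableOn_Ioi_cexp_neg_mul_mul hl (by fun_prop) (C := C₂ + ‖l‖ ^ 2 * C₀)
    (fun x => by grw [norm_sub_le, norm_mul, norm_pow, h₂ x, h₀ x]) 0

theorem integral_Ioi_cexp_neg_mul_mul_sub (hl : 0 < l.re)
    (hφ : ∀ x, HasDerivAt φ (φ' x) x) (hφ' : ∀ x, HasDerivAt φ' (φ'' x) x)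
    (hφ''_cont : Continuous φ'')
    (h₀ : ∀ x, ‖φ x‖ ≤ C₀) (h₁ : ∀ x, ‖φ' x‖ ≤ C₁) (h₂ : ∀ x, ‖φ'' x‖ ≤ C₂) :
    ∫ x : ℝ in Ioi 0, cexp (-l * x) * (φ'' x - l ^ 2 * φ x) = -(φ' 0 + l * φ 0) := by
  have hφ_cont : Continuous φ := continuous_iff_continuousAt.2 fun x => (hφ x).continuousAt
  have hprim : ∀ x : ℝ, HasDerivAt (fun x : ℝ => cexp (-l * x) * (φ' x + l * φ x))
      (cexp (-l * x) * (φ'' x - l ^ 2 * φ x)) x := by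
    intro x
    have hexp : HasDerivAt (fun x : ℝ => cexp (-l * x)) (cexp (-l * x) * -l) x := by
      simpa using ((hasDerivAt_id (x : ℂ)).const_mul (-l)).cexp.comp_ofReal
    refine (hexp.mul ((hφ' x).add ((hφ x).const_mul l))).congr_deriv ?_
    simp only [Pi.add_apply]
    ring
  have hlim : Tendsto (fun x : ℝ => cexp (-l * x) * (φ' x + l * φ x)) atTop (𝓝 0) :=
    tendsto_cexp_neg_mul_mul_atTop_zero hl (C := C₁ + ‖l‖ * C₀)
      (fun x => by grw [norm_add_le, norm_mul, h₁ x, h₀ x])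
  rw [integral_Ioi_of_hasDerivAt_of_tendsto' (fun x _ => hprim x)
    (integrableOn_Ioi_cexp_neg_mul_mul_sub hl hφ_cont hφ''_cont h₀ h₂) hlim]
  simp

theorem integral_cexp_neg_mul_abs_mul_sub (hl : 0 < l.re)
    (hφ : ∀ x, HasDerivAt φ (φ' x) x) (hφ' : ∀ x, HasDerivAt φ' (φ'' x) x)
    (hφ''_cont : Continuous φ'')
    (h₀ : ∀ x, ‖φ x‖ ≤ C₀) (h₁ : ∀ x, ‖φ' x‖ ≤ C₁) (h₂ : ∀ x, ‖φ'' x‖ ≤ C₂) :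
    ∫ x : ℝ, cexp (-l * |x|) * (φ'' x - l ^ 2 * φ x) = -2 * l * φ 0 := by
  have hφ_cont : Continuous φ := continuous_iff_continuousAt.2 fun x => (hφ x).continuousAt
  have hψ : ∀ x, HasDerivAt (fun x => φ (-x)) (-φ' (-x)) x := fun x =>
    ((hφ (-x)).scomp x (hasDerivAt_neg x)).congr_deriv (by simp)
  have hψ' : ∀ x, HasDerivAt (fun x => -φ' (-x)) (φ'' (-x)) x := fun x =>
    ((hφ' (-x)).scomp x (hasDerivAt_neg x)).neg.congr_deriv (by simp)
  have habs : ∀ g : ℝ → ℂ, EqOn (fun x : ℝ => cexp (-l * |x|) * g x)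
      (fun x => cexp (-l * x) * g x) (Ioi 0) := fun g x hx => by
    simp only [abs_of_pos (mem_Ioi.1 hx)]
  have hpos := (integrableOn_Ioi_cexp_neg_mul_mul_sub hl hφ_cont hφ''_cont h₀ h₂).congr_fun
    (habs _).symm measurableSet_Ioi
  have hneg : IntegrableOn
      (fun x : ℝ => cexp (-l * |-x|) * (φ'' (-x) - l ^ 2 * φ (-x))) (Ioi 0) := by
    simpa only [abs_neg, Function.comp_apply] using (integrableOn_Ioi_cexp_neg_mul_mul_sub hl
      (hφ_cont.comp continuous_neg) (hφ''_cont.comp continuous_neg) (fun x => h₀ (-x))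
      (fun x => h₂ (-x))).congr_fun (habs _).symm measurableSet_Ioi
  rw [integral_eq_integral_Ioi_add_integral_Ioi_comp_neg hpos hneg]
  simp only [abs_neg]
  rw [setIntegral_congr_fun measurableSet_Ioi (habs _),
    setIntegral_congr_fun measurableSet_Ioi (habs _),
    integral_Ioi_cexp_neg_mul_mul_sub hl hφ hφ' hφ''_cont h₀ h₁ h₂,
    integral_Ioi_cexp_neg_mul_mul_sub hl hψ hψ' (hφ''_cont.comp continuous_neg) (fun x => h₀ (-x))
      (fun x => by simpa using h₁ (-x)) (fun x => h₂ (-x)), neg_zero]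
  ring

end GreenFunction

/-- `G(x) = c e^{-λ|x|}`, with `λ = (√2/2)(1+i)` and `c = i/(√2(1+i))`, is the Green's
function of `T⁻¹ = 1 - i p̂₀² = 1 + i d²/dx²`: for every Schwartz `φ`,
`∫ c e^{-λ|x|} (φ(x) + i φ''(x)) dx = φ(0)`, i.e. `(T⁻¹ G)(x) = δ(x)` distributionally. -/
theorem statement14 (l c : ℂ)
    (hl : l = (Real.sqrt 2 / 2 : ℝ) * (1 + Complex.I))
    (hc : c = Complex.I / ((Real.sqrt 2 : ℝ) * (1 + Complex.I))) :
    ∀ φ : SchwartzMap ℝ ℂ,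
      ∫ x : ℝ, c * Complex.exp (-l * ((|x| : ℝ) : ℂ))
          * (φ x + Complex.I * deriv (deriv (⇑φ)) x) = φ 0 := by
  intro φ
  have hsqrt : ((Real.sqrt 2 : ℝ) : ℂ) ^ 2 = 2 := by norm_cast; simp
  have hl_re : 0 < l.re := by simp [hl]
  have hl_sq : l ^ 2 = I := by
    rw [hl]; push_cast; linear_combination (1 / 4 * (1 + I) ^ 2) * hsqrt + I_sq / 2
  have hcl : c * I * (-2 * l) = 1 := by
    have h1I : 1 + I ≠ 0 := by simp [Complex.ext_iff]
    rw [hc, hl]; push_cast; field_simp; linear_combination -I_sq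
  set φ₁ := SchwartzMap.derivCLM ℝ ℂ φ
  set φ₂ := SchwartzMap.derivCLM ℝ ℂ φ₁
  have hφ₁ : deriv ⇑φ = ⇑φ₁ := funext fun x => (SchwartzMap.derivCLM_apply ℝ φ x).symm
  have hφ₂ : deriv (deriv ⇑φ) = ⇑φ₂ := by
    rw [hφ₁]; exact funext fun x => (SchwartzMap.derivCLM_apply ℝ φ₁ x).symm
  have hG := integral_cexp_neg_mul_abs_mul_sub hl_re (φ' := φ₁) (φ'' := φ₂)
    (fun x => by simpa [φ₁] using φ.hasDerivAt x) (fun x => by simpa [φ₂] using φ₁.hasDerivAt x)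
    φ₂.continuous (φ.norm_le_seminorm ℝ) (φ₁.norm_le_seminorm ℝ) (φ₂.norm_le_seminorm ℝ)
  calc _ = ∫ x : ℝ, c * I * (cexp (-l * |x|) * (φ₂ x - l ^ 2 * φ x)) := by
        congr 1; ext x; rw [hφ₂, hl_sq]; linear_combination (c * cexp (-l * |x|) * φ x) * I_sq
    _ = φ 0 := by rw [integral_const_mul, hG]; linear_combination φ 0 * hcl
end

section
/- Let λ = (√2/2)(1 + i) and c = i/(√2 (1 + i)). For every φ ∈ 𝓢(ℝ,ℂ), the function f(x) = c ∫_ℝ φ(x - s) e^{-λ |s|} ds is again a Schwartz function; that is, there exists ψ ∈ 𝓢(ℝ,ℂ) with ψ(x) = c ∫_ℝ φ(x - s) e^{-λ |s|} ds for all x ∈ ℝ (equivalently, f is smooth and for all k, l ≥ 0 there is C with |x|^l |f^{(k)}(x)| ≤ C for all x). -/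
/-!
The integral is the convolution `φ ⋆ g` with `g(s) = e^{-λ|s|}`. Differentiating under the
integral sign moves every derivative onto `φ`: `(φ ⋆ g)' = φ' ⋆ g`, because `φ'` is bounded
and `g` is integrable. For the decay, the inequality `|x|^k ≤ 2^(k-1) (|x - s|^k + |s|^k)`
bounds `|x|^k |(φ ⋆ g)(x)|` by the decay of `φ` against `∫ |g|` plus the sup of `φ` against
the `k`-th moment of `g`, and `g` has moments of all orders because `Re λ > 0`.
-/
open MeasureTheory Set
open scoped Convolution ContDiff

theorem integrable_comp_abs_of_integrableOn_Ioi {E : Type*} [NormedAddCommGroup E] {f : ℝ → E}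
    (hf : IntegrableOn f (Ioi 0)) : Integrable fun x => f |x| := by
  have hIoi : IntegrableOn (fun x => f |x|) (Ioi 0) :=
    hf.congr_fun (fun x hx => by rw [abs_of_pos (mem_Ioi.1 hx)]) measurableSet_Ioi
  have hIic : IntegrableOn (fun x => f |x|) (Iic 0) := by
    have hneg : MeasurableEmbedding fun x : ℝ => -x := (Homeomorph.neg ℝ).measurableEmbedding
    rw [← Measure.map_neg_eq_self (volume : Measure ℝ), hneg.integrableOn_map_iff]
    simp_rw [Function.comp_def, abs_neg, neg_preimage, neg_Iic, neg_zero]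
    exact Iff.mpr integrableOn_Ici_iff_integrableOn_Ioi hIoi
  rw [← integrableOn_univ, ← Iic_union_Ioi (a := 0), integrableOn_union]
  exact ⟨hIic, hIoi⟩

theorem integrable_pow_abs_mul_exp_neg_mul_abs (k : ℕ) {a : ℝ} (ha : 0 < a) :
    Integrable fun s : ℝ => |s| ^ k * Real.exp (-a * |s|) := by
  refine integrable_comp_abs_of_integrableOn_Ioi (f := fun s => s ^ k * Real.exp (-a * s)) ?_
  simpa using integrableOn_rpow_mul_exp_neg_mul_rpow (p := 1) (s := k)
    (neg_one_lt_zero.trans_le k.cast_nonneg) one_pos ha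

theorem integrable_norm_pow_mul_norm_exp_neg_mul_abs {l : ℂ} (hl : 0 < l.re) (k : ℕ) :
    Integrable fun s : ℝ => ‖s‖ ^ k * ‖Complex.exp (-l * ((|s| : ℝ) : ℂ))‖ := by
  simpa [Complex.norm_exp] using integrable_pow_abs_mul_exp_neg_mul_abs k hl

theorem convolution_mul_eq_integral (f g : ℝ → ℂ) (x : ℝ) :
    (f ⋆[ContinuousLinearMap.mul ℝ ℂ] g) x = ∫ s, f (x - s) * g s :=
  convolution_eq_swap _

namespace SchwartzMap

variable {g : ℝ → ℂ}

local notation:67 f " ⋆ₘ " g => f ⋆[ContinuousLinearMap.mul ℝ ℂ] g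

theorem integrable_sub_mul (f : 𝓢(ℝ, ℂ)) (hg : Integrable g) (x : ℝ) :
    Integrable fun s => f (x - s) * g s :=
  hg.bdd_mul ((f.continuous.comp (continuous_const.sub continuous_id)).aestronglyMeasurable)
    (Filter.Eventually.of_forall fun s => norm_le_seminorm ℝ f (x - s))

theorem hasDerivAt_convolution_mul (f : 𝓢(ℝ, ℂ)) (hg : Integrable g) (x : ℝ) :
    HasDerivAt (⇑f ⋆ₘ g) ((⇑(derivCLM ℝ ℂ f) ⋆ₘ g) x) x := by
  simp only [funext (convolution_mul_eq_integral f g), convolution_mul_eq_integral]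
  refine (hasDerivAt_integral_of_dominated_loc_of_deriv_le
    (F' := fun y s => derivCLM ℝ ℂ f (y - s) * g s) Filter.univ_mem
    (Filter.Eventually.of_forall fun y => (integrable_sub_mul f hg y).aestronglyMeasurable)
    (integrable_sub_mul f hg x) (integrable_sub_mul (derivCLM ℝ ℂ f) hg x).aestronglyMeasurable
    (bound := fun s => SchwartzMap.seminorm ℝ 0 0 (derivCLM ℝ ℂ f) * ‖g s‖) ?_
    (hg.norm.const_mul _) ?_).2
  · refine Filter.Eventually.of_forall fun s y _ => ?_
    rw [norm_mul]
    exact mul_le_mul_of_nonneg_right (norm_le_seminorm ℝ _ _) (norm_nonneg _)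
  · refine Filter.Eventually.of_forall fun s y _ => ?_
    have hf : HasDerivAt f (derivCLM ℝ ℂ f (y - s)) (y - s) := by
      rw [derivCLM_apply]
      exact f.differentiableAt.hasDerivAt
    simpa using (hf.comp_sub_const y s).mul_const (g s)

theorem deriv_convolution_mul (f : 𝓢(ℝ, ℂ)) (hg : Integrable g) :
    deriv (⇑f ⋆ₘ g) = ⇑(derivCLM ℝ ℂ f) ⋆ₘ g :=
  funext fun x => (hasDerivAt_convolution_mul f hg x).deriv

theorem differentiable_convolution_mul (f : 𝓢(ℝ, ℂ)) (hg : Integrable g) :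
    Differentiable ℝ (⇑f ⋆ₘ g) :=
  fun x => (hasDerivAt_convolution_mul f hg x).differentiableAt

theorem contDiff_convolution_mul (f : 𝓢(ℝ, ℂ)) (hg : Integrable g) :
    ContDiff ℝ ∞ (⇑f ⋆ₘ g) := by
  refine contDiff_infty.2 fun n => ?_
  induction n generalizing f with
  | zero => exact contDiff_zero.2 (differentiable_convolution_mul f hg).continuous
  | succ n ih =>
    rw [Nat.cast_succ, contDiff_succ_iff_deriv, deriv_convolution_mul f hg]
    exact ⟨differentiable_convolution_mul f hg, by simp, ih _⟩

theorem norm_pow_mul_norm_convolution_mul_le (f : 𝓢(ℝ, ℂ)) (hg : Integrable g) {k : ℕ}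
    (hgk : Integrable fun s => ‖s‖ ^ k * ‖g s‖) (x : ℝ) :
    ‖x‖ ^ k * ‖(⇑f ⋆ₘ g) x‖ ≤ 2 ^ (k - 1) * ((SchwartzMap.seminorm ℝ k 0 f * ∫ s, ‖g s‖) +
      SchwartzMap.seminorm ℝ 0 0 f * ∫ s, ‖s‖ ^ k * ‖g s‖) := by
  set A := SchwartzMap.seminorm ℝ k 0 f
  set B := SchwartzMap.seminorm ℝ 0 0 f
  have hpt (s : ℝ) :
      ‖x‖ ^ k * ‖f (x - s) * g s‖ ≤ 2 ^ (k - 1) * (A * ‖g s‖ + B * (‖s‖ ^ k * ‖g s‖)) := by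
    have hx : ‖x‖ ^ k ≤ 2 ^ (k - 1) * (‖x - s‖ ^ k + ‖s‖ ^ k) :=
      (pow_le_pow_left₀ (norm_nonneg x) (norm_le_norm_sub_add x s) k).trans
        (add_pow_le (norm_nonneg _) (norm_nonneg _) k)
    have hA := norm_pow_mul_le_seminorm ℝ f k (x - s)
    have hB := norm_le_seminorm ℝ f (x - s)
    rw [norm_mul]
    calc ‖x‖ ^ k * (‖f (x - s)‖ * ‖g s‖)
        ≤ 2 ^ (k - 1) * (‖x - s‖ ^ k + ‖s‖ ^ k) * ‖f (x - s)‖ * ‖g s‖ := by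
          rw [← mul_assoc]; gcongr
      _ = 2 ^ (k - 1) * (‖x - s‖ ^ k * ‖f (x - s)‖ + ‖s‖ ^ k * ‖f (x - s)‖) * ‖g s‖ := by ring
      _ ≤ 2 ^ (k - 1) * (A + ‖s‖ ^ k * B) * ‖g s‖ := by gcongr
      _ = _ := by ring
  calc ‖x‖ ^ k * ‖(⇑f ⋆ₘ g) x‖
      ≤ ‖x‖ ^ k * ∫ s, ‖f (x - s) * g s‖ := by
        rw [convolution_mul_eq_integral]; gcongr; exact norm_integral_le_integral_norm _
    _ = ∫ s, ‖x‖ ^ k * ‖f (x - s) * g s‖ := (integral_const_mul _ _).symm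
    _ ≤ ∫ s, 2 ^ (k - 1) * (A * ‖g s‖ + B * (‖s‖ ^ k * ‖g s‖)) :=
        integral_mono ((integrable_sub_mul f hg x).norm.const_mul _)
          (((hg.norm.const_mul A).add (hgk.const_mul B)).const_mul _) hpt
    _ = _ := by
        rw [integral_const_mul, integral_add (hg.norm.const_mul A) (hgk.const_mul B),
          integral_const_mul, integral_const_mul]

theorem decay_iteratedDeriv_convolution_mul (hg : Integrable g)
    {k : ℕ} (hgk : Integrable fun s => ‖s‖ ^ k * ‖g s‖) (n : ℕ) (f : 𝓢(ℝ, ℂ)) :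
    ∃ C, ∀ x, ‖x‖ ^ k * ‖iteratedDeriv n (⇑f ⋆ₘ g) x‖ ≤ C := by
  induction n generalizing f with
  | zero => exact ⟨_, fun x => by
      simpa using norm_pow_mul_norm_convolution_mul_le f hg hgk x⟩
  | succ n ih =>
    rw [iteratedDeriv_succ', deriv_convolution_mul f hg]
    exact ih _

theorem exists_eq_convolution_mul (hg : AEStronglyMeasurable g)
    (hmom : ∀ k : ℕ, Integrable fun s => ‖s‖ ^ k * ‖g s‖) (f : 𝓢(ℝ, ℂ)) :
    ∃ ψ : 𝓢(ℝ, ℂ), ⇑ψ = ⇑f ⋆ₘ g := by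
  have hg_int : Integrable g := (integrable_norm_iff hg).1 (by simpa using hmom 0)
  refine ⟨⟨⇑f ⋆ₘ g, contDiff_convolution_mul f hg_int, fun k n => ?_⟩, rfl⟩
  simp_rw [norm_iteratedFDeriv_eq_norm_iteratedDeriv]
  exact decay_iteratedDeriv_convolution_mul hg_int (hmom k) n f

end SchwartzMap

theorem statement15_general (l c : ℂ)
    (hl : l = (Real.sqrt 2 / 2 : ℝ) * (1 + Complex.I)) :
    ∀ φ : SchwartzMap ℝ ℂ,
      ∃ ψ : SchwartzMap ℝ ℂ,
        ∀ x : ℝ, ψ x = c * ∫ s : ℝ, φ (x - s) * Complex.exp (-l * ((|s| : ℝ) : ℂ)) := by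
  intro φ
  have hl_re : 0 < l.re := by simp [hl]
  obtain ⟨ψ, hψ⟩ := SchwartzMap.exists_eq_convolution_mul (by fun_prop)
    (integrable_norm_pow_mul_norm_exp_neg_mul_abs hl_re) φ
  exact ⟨c • ψ, fun x => by simp [hψ, convolution_mul_eq_integral]⟩

/-- The operator `T φ(x) = c ∫ φ(x-s) e^{-λ|s|} ds`, convolution with the Green's function
`G(x) = c e^{-λ|x|}` (`λ = (√2/2)(1+i)`, `c = i/(√2(1+i))`), maps `𝓢(ℝ)` into `𝓢(ℝ)`:
for every Schwartz `φ` there is a Schwartz `ψ` with `ψ(x) = c ∫ φ(x-s) e^{-λ|s|} ds`. -/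
theorem statement15 (l c : ℂ)
    (hl : l = (Real.sqrt 2 / 2 : ℝ) * (1 + Complex.I))
    (hc : c = Complex.I / ((Real.sqrt 2 : ℝ) * (1 + Complex.I))) :
    ∀ φ : SchwartzMap ℝ ℂ,
      ∃ ψ : SchwartzMap ℝ ℂ,
        ∀ x : ℝ, ψ x = c * ∫ s : ℝ, φ (x - s) * Complex.exp (-l * ((|s| : ℝ) : ℂ)) :=
  statement15_general l c hl
end

section
/- Let λ = (√2/2)(1 + i) and c = i/(√2 (1 + i)). Then for every φ ∈ 𝓢(ℝ,ℂ) and every x ∈ ℝ: c ∫_ℝ (φ(x - s) + i φ''(x - s)) e^{-λ |s|} ds = φ(x). (That is, T(T⁻¹ φ) = φ on 𝓢(ℝ,ℂ), where T⁻¹ φ = φ + i φ'' and T is convolution with the Green's function c e^{-λ|·|}.) -/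
/-!
On each half-line, `(f'' - λ² f) e^{-λ s}` has the explicit primitive `e^{-λ s} (λ f + f')`,
which vanishes at infinity when `Re λ > 0` and `f`, `f'` are bounded. Hence
`∫ (f''(s) - λ² f(s)) e^{-λ|s|} ds` reduces to boundary terms at `0` adding up to `-2λ f(0)`:
`-e^{-λ|s|} / (2λ)` is the Green's function of `d²/ds² - λ²`. For the given `λ` we have `λ² = i`,
so `φ + i φ'' = i (φ'' - λ² φ)`, and `c · i · (-2λ) = 1`.
-/

open MeasureTheory Filter Set Topology Asymptotics Complex

section

variable {f f' f'' : ℝ → ℂ} {l : ℂ}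

lemma hasDerivAt_cexp_neg_mul_mul_add {s : ℝ} (hf : HasDerivAt f (f' s) s)
    (hf' : HasDerivAt f' (f'' s) s) :
    HasDerivAt (fun t : ℝ => cexp (-l * t) * (l * f t + f' t))
      ((f'' s - l ^ 2 * f s) * cexp (-l * s)) s := by
  have hexp : HasDerivAt (fun t : ℝ => cexp (-l * t)) (cexp (-l * s) * -l) s := by
    simpa using ((ofRealCLM.hasDerivAt (x := s)).const_mul (-l)).cexp
  exact (hexp.mul ((hf.const_mul l).add hf')).congr_deriv (by simp only [Pi.add_apply]; ring)

lemma norm_cexp_neg_mul_ofReal (l : ℂ) (t : ℝ) : ‖cexp (-l * t)‖ = Real.exp (-(l.re * t)) := by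
  simp [norm_exp]

lemma tendsto_cexp_neg_mul_atTop (hl : 0 < l.re) :
    Tendsto (fun t : ℝ => cexp (-l * t)) atTop (𝓝 0) := by
  rw [tendsto_zero_iff_norm_tendsto_zero]
  simp only [norm_cexp_neg_mul_ofReal]
  exact Real.tendsto_exp_neg_atTop_nhds_zero.comp (tendsto_id.const_mul_atTop hl)

lemma MeasureTheory.IntegrableOn.mul_cexp_neg_mul_Ioi {g : ℝ → ℂ} (hl : 0 ≤ l.re)
    (hg : IntegrableOn g (Ioi 0)) :
    IntegrableOn (fun s : ℝ => g s * cexp (-l * s)) (Ioi 0) := by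
  refine Integrable.mul_bdd hg (by fun_prop) (c := 1) ?_
  refine (ae_restrict_iff' measurableSet_Ioi).2 (Eventually.of_forall fun s (hs : 0 < s) => ?_)
  rw [norm_cexp_neg_mul_ofReal, Real.exp_le_one_iff, neg_nonpos]
  exact mul_nonneg hl hs.le

theorem integral_Ioi_deriv_deriv_sub_mul_cexp_neg (hl : 0 < l.re)
    (hf : ∀ s, HasDerivAt f (f' s) s) (hf' : ∀ s, HasDerivAt f' (f'' s) s)
    (hfb : f =O[atTop] (1 : ℝ → ℝ)) (hf'b : f' =O[atTop] (1 : ℝ → ℝ))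
    (hint : IntegrableOn (fun s => f'' s - l ^ 2 * f s) (Ioi 0)) :
    ∫ s in Ioi 0, (f'' s - l ^ 2 * f s) * cexp (-l * s) = -(l * f 0 + f' 0) := by
  have hH := fun s => hasDerivAt_cexp_neg_mul_mul_add (l := l) (hf s) (hf' s)
  have hbdd : IsBoundedUnder (· ≤ ·) atTop (norm ∘ fun t => l * f t + f' t) :=
    (isBigO_one_iff ℝ).1 ((hfb.const_mul_left l).add hf'b)
  rw [integral_Ioi_of_hasDerivAt_of_tendsto (hH 0).continuousAt.continuousWithinAt
    (fun s _ => hH s) (hint.mul_cexp_neg_mul_Ioi hl.le)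
    ((tendsto_cexp_neg_mul_atTop hl).zero_mul_isBoundedUnder_le hbdd)]
  simp

theorem integral_deriv_deriv_sub_mul_cexp_neg_abs (hl : 0 < l.re)
    (hf : ∀ s, HasDerivAt f (f' s) s) (hf' : ∀ s, HasDerivAt f' (f'' s) s)
    (hfb : f =O[cocompact ℝ] (1 : ℝ → ℝ)) (hf'b : f' =O[cocompact ℝ] (1 : ℝ → ℝ))
    (hint : Integrable fun s => f'' s - l ^ 2 * f s) :
    ∫ s, (f'' s - l ^ 2 * f s) * cexp (-l * |s|) = -2 * l * f 0 := by
  set G := fun s : ℝ => (f'' s - l ^ 2 * f s) * cexp (-l * |s|)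
  have hG : Integrable G := hint.mul_bdd (by fun_prop) (c := 1) <| .of_forall fun s => by
    rw [norm_cexp_neg_mul_ofReal, Real.exp_le_one_iff, neg_nonpos]
    exact mul_nonneg hl.le (abs_nonneg s)
  have hright : ∫ s in Ioi 0, G s = ∫ s in Ioi 0, (f'' s - l ^ 2 * f s) * cexp (-l * s) :=
    setIntegral_congr_fun measurableSet_Ioi fun s (hs : 0 < s) => by simp [G, abs_of_pos hs]
  have hleft : ∫ s in Ioi 0, G (-s) =
      ∫ s in Ioi 0, (f'' (-s) - l ^ 2 * f (-s)) * cexp (-l * s) :=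
    setIntegral_congr_fun measurableSet_Ioi fun s (hs : 0 < s) => by simp [G, abs_of_pos hs]
  have hneg : Tendsto (fun s : ℝ => -s) atTop (cocompact ℝ) :=
    tendsto_neg_atTop_atBot.mono_right atBot_le_cocompact
  rw [← intervalIntegral.integral_Iic_add_Ioi hG.integrableOn hG.integrableOn,
    ← neg_zero, ← integral_comp_neg_Ioi, neg_zero, hleft, hright,
    integral_Ioi_deriv_deriv_sub_mul_cexp_neg hl hf hf' (hfb.mono atTop_le_cocompact)
      (hf'b.mono atTop_le_cocompact) hint.integrableOn,
    integral_Ioi_deriv_deriv_sub_mul_cexp_neg (f := fun s => f (-s)) (f' := fun s => -f' (-s))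
      hl
      (fun s => ((hf (-s)).scomp s (hasDerivAt_neg s)).congr_deriv (by simp))
      (fun s => ((hf' (-s)).scomp s (hasDerivAt_neg s)).neg.congr_deriv (by simp))
      (hfb.comp_tendsto hneg) (hf'b.comp_tendsto hneg).neg_left hint.comp_neg.integrableOn]
  simp only [neg_zero]
  ring

lemma SchwartzMap.isBigO_one_comp (φ : SchwartzMap ℝ ℂ) (g : ℝ → ℝ) (L : Filter ℝ) :
    (fun s => φ (g s)) =O[L] (1 : ℝ → ℝ) :=
  .of_bound (SchwartzMap.seminorm ℂ 0 0 φ) <| .of_forall fun s => by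
    simpa using φ.norm_le_seminorm ℂ (g s)

theorem SchwartzMap.integral_deriv_deriv_sub_mul_cexp_neg_abs (φ : SchwartzMap ℝ ℂ)
    (hl : 0 < l.re) (x : ℝ) :
    ∫ s, (deriv (deriv φ) (x - s) - l ^ 2 * φ (x - s)) * cexp (-l * |s|) = -2 * l * φ x := by
  set φ' := SchwartzMap.derivCLM ℝ ℂ φ
  set φ'' := SchwartzMap.derivCLM ℝ ℂ φ'
  have hφ' : ⇑φ' = deriv φ := funext (SchwartzMap.derivCLM_apply ℝ φ)
  have hφ'' : ⇑φ'' = deriv (deriv φ) := by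
    rw [← hφ']; exact funext (SchwartzMap.derivCLM_apply ℝ φ')
  rw [← hφ'']
  simpa using _root_.integral_deriv_deriv_sub_mul_cexp_neg_abs (f := fun s => φ (x - s))
    (f' := fun s => -φ' (x - s)) (f'' := fun s => φ'' (x - s)) hl
    (fun s => hφ' ▸ φ.differentiableAt.hasDerivAt.comp_const_sub x s)
    (fun s => (φ'.differentiableAt.hasDerivAt.comp_const_sub x s).neg.congr_deriv
      (by rw [neg_neg, ← SchwartzMap.derivCLM_apply ℝ φ']))
    (φ.isBigO_one_comp _ _) (φ'.isBigO_one_comp _ _).neg_left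
    ((φ''.integrable.comp_sub_left x).sub ((φ.integrable.comp_sub_left x).const_mul _))

end

/-- `T (T⁻¹ φ) = φ` on `𝓢(ℝ)` in the second example: with `λ = (√2/2)(1+i)` and
`c = i/(√2(1+i))`, `T⁻¹ φ = φ + i φ''` and `T` is convolution with `c e^{-λ|·|}`, so
`c ∫ (φ(x-s) + i φ''(x-s)) e^{-λ|s|} ds = φ(x)`. -/
theorem statement16 (l c : ℂ)
    (hl : l = (Real.sqrt 2 / 2 : ℝ) * (1 + Complex.I))
    (hc : c = Complex.I / ((Real.sqrt 2 : ℝ) * (1 + Complex.I))) :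
    ∀ (φ : SchwartzMap ℝ ℂ) (x : ℝ),
      c * ∫ s : ℝ, (φ (x - s) + Complex.I * deriv (deriv (⇑φ)) (x - s))
          * Complex.exp (-l * ((|s| : ℝ) : ℂ)) = φ x := by
  intro φ x
  have hsqrt : ((Real.sqrt 2 : ℝ) : ℂ) ^ 2 = 2 := by norm_cast; simp
  have hl2 : l ^ 2 = I := by
    rw [hl]; push_cast; linear_combination ((1 + I) ^ 2 / 4) * hsqrt + I_sq / 2
  have hlre : 0 < l.re := by rw [hl]; simp
  have hcl : c * I * (-2 * l) = 1 := by
    have hne : ((Real.sqrt 2 : ℝ) : ℂ) * (1 + I) ≠ 0 := by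
      refine mul_ne_zero (by simp) fun h => by simpa using congrArg re h
    rw [hc, hl, div_mul_eq_mul_div, div_mul_eq_mul_div, div_eq_one_iff_eq hne]
    push_cast
    linear_combination (-((Real.sqrt 2 : ℝ) : ℂ) * (1 + I)) * I_sq
  calc c * ∫ s, (φ (x - s) + I * deriv (deriv φ) (x - s)) * cexp (-l * |s|)
      = c * ∫ s, I * ((deriv (deriv φ) (x - s) - l ^ 2 * φ (x - s)) * cexp (-l * |s|)) := by
        congr 1; refine integral_congr_ae (.of_forall fun s => ?_)
        rw [hl2]; linear_combination (φ (x - s) * cexp (-l * |s|)) * I_sq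
    _ = φ x := by
        rw [integral_const_mul, φ.integral_deriv_deriv_sub_mul_cexp_neg_abs hlre]
        linear_combination φ x * hcl
end

section
/- Let λ = (√2/2)(1 + i) and c = i/(√2 (1 + i)). Then for every ψ ∈ 𝓢(ℝ,ℂ) and every x₀ ∈ ℝ: ∫_ℝ conj(c) e^{-conj(λ) |x - x₀|} (ψ(x) - i ψ''(x)) dx = ψ(x₀). (This is the biorthogonality relation ⟨η_{x₀}, η^{y₀}⟩ = δ(x₀ - y₀) between the eigenvector families η_{x₀}(x) = c e^{-λ|x - x₀|} of q̂ and η^{y₀} = ξ_{y₀} - i ξ''_{y₀} of q̂†, smeared in y₀ against the test function ψ.) -/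
open MeasureTheory Set Filter Complex
open scoped Topology ComplexConjugate SchwartzMap

/-!
For `Re μ > 0`, `e^{-μ|x|} / (2μ)` is the Green's function of `μ² - d²/dx²` on `ℝ`.
Indeed, on `x > x₀` the function `e^{-μ(x-x₀)} (μ² f - f'')` is the derivative of
`-e^{-μ(x-x₀)} (μ f + f')`, which vanishes at `+∞` when `f, f'` are bounded, so that half-line
contributes `μ f(x₀) + f'(x₀)`; by reflection the other half-line contributes
`μ f(x₀) - f'(x₀)`. For `μ = conj λ = (√2/2)(1 - i)` one has `μ² = -i`, so
`ψ - iψ'' = i(μ²ψ - ψ'')`, and the normalisation `conj c · i · 2μ = 1` gives `ψ(x₀)`.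
-/

lemma hasDerivAt_cexp_neg_mul_sub (μ : ℂ) (x₀ x : ℝ) :
    HasDerivAt (fun x : ℝ => cexp (-μ * (x - x₀))) (cexp (-μ * (x - x₀)) * -μ) x := by
  have := (((hasDerivAt_id x).ofReal_comp).sub_const (x₀ : ℂ)).const_mul (-μ)
  simpa using this.cexp

section
variable {μ : ℂ}

lemma integrable_cexp_neg_mul_abs_sub (hμ : 0 < μ.re) (x₀ : ℝ) :
    Integrable fun x : ℝ => cexp (-μ * |x - x₀|) := by
  rw [← integrableOn_univ, ← Iic_union_Ioi (a := x₀)]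
  refine IntegrableOn.union ?_ ?_
  · refine IntegrableOn.congr_fun ((integrableOn_exp_mul_complex_Iic hμ x₀).mul_const
      (cexp (-μ * x₀))) (fun x hx => ?_) measurableSet_Iic
    rw [abs_of_nonpos (sub_nonpos.2 hx), ← Complex.exp_add]
    push_cast
    ring_nf
  · refine IntegrableOn.congr_fun ((integrableOn_exp_mul_complex_Ioi (a := -μ)
      (by simpa using hμ) x₀).mul_const (cexp (μ * x₀))) (fun x hx => ?_) measurableSet_Ioi
    rw [abs_of_pos (sub_pos.2 hx), ← Complex.exp_add]
    push_cast
    ring_nf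

lemma integrable_cexp_neg_mul_abs_sub_mul_sq_sub {f f' f'' : ℝ → ℂ} {C₀ C₂ : ℝ}
    (hμ : 0 < μ.re) (hf : ∀ x, HasDerivAt f (f' x) x) (hf''c : Continuous f'')
    (hC₀ : ∀ x, ‖f x‖ ≤ C₀) (hC₂ : ∀ x, ‖f'' x‖ ≤ C₂) (x₀ : ℝ) :
    Integrable fun x : ℝ => cexp (-μ * |x - x₀|) * (μ ^ 2 * f x - f'' x) := by
  have hfc : Continuous f := continuous_iff_continuousAt.2 fun x => (hf x).continuousAt
  refine (integrable_cexp_neg_mul_abs_sub hμ x₀).mul_bdd (c := ‖μ ^ 2‖ * C₀ + C₂)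
    ((continuous_const.mul hfc).sub hf''c).aestronglyMeasurable (ae_of_all _ fun x => ?_)
  exact (norm_sub_le _ _).trans (add_le_add (by rw [norm_mul]; gcongr; exact hC₀ x) (hC₂ x))

lemma tendsto_cexp_neg_mul_sub_atTop (hμ : 0 < μ.re) (x₀ : ℝ) :
    Tendsto (fun x : ℝ => cexp (-μ * (x - x₀))) atTop (𝓝 0) := by
  rw [Complex.tendsto_exp_nhds_zero_iff]
  have : Tendsto (fun x : ℝ => x - x₀) atTop atTop := tendsto_atTop_add_const_right _ _ tendsto_id
  simpa using this.const_mul_atTop_of_neg (neg_neg_iff_pos.2 hμ)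

lemma integral_Ioi_cexp_neg_mul_abs_sub_mul_sq_sub {f f' f'' : ℝ → ℂ} {C₀ C₁ C₂ : ℝ}
    (hμ : 0 < μ.re) (hf : ∀ x, HasDerivAt f (f' x) x) (hf' : ∀ x, HasDerivAt f' (f'' x) x)
    (hf''c : Continuous f'') (hC₀ : ∀ x, ‖f x‖ ≤ C₀) (hC₁ : ∀ x, ‖f' x‖ ≤ C₁)
    (hC₂ : ∀ x, ‖f'' x‖ ≤ C₂) (x₀ : ℝ) :
    ∫ x in Ioi x₀, cexp (-μ * |x - x₀|) * (μ ^ 2 * f x - f'' x) = μ * f x₀ + f' x₀ := by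
  have hderiv : ∀ x : ℝ, HasDerivAt (fun x : ℝ => -cexp (-μ * (x - x₀)) * (μ * f x + f' x))
      (cexp (-μ * (x - x₀)) * (μ ^ 2 * f x - f'' x)) x := fun x => by
    refine ((hasDerivAt_cexp_neg_mul_sub μ x₀ x).neg.mul
      (((hf x).const_mul μ).add (hf' x))).congr_deriv ?_
    simp only [Pi.neg_apply, Pi.add_apply]
    ring
  have habs : EqOn (fun x : ℝ => cexp (-μ * |x - x₀|) * (μ ^ 2 * f x - f'' x))
      (fun x => cexp (-μ * (x - x₀)) * (μ ^ 2 * f x - f'' x)) (Ioi x₀) := fun x hx => by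
    simp only [abs_of_pos (sub_pos.2 (mem_Ioi.1 hx)), ofReal_sub]
  have hint := integrable_cexp_neg_mul_abs_sub_mul_sq_sub hμ hf hf''c hC₀ hC₂ x₀
  have hbdd : IsBoundedUnder (· ≤ ·) atTop (fun x => ‖μ * f x + f' x‖) :=
    isBoundedUnder_of ⟨‖μ‖ * C₀ + C₁, fun x =>
      (norm_add_le _ _).trans (add_le_add (by rw [norm_mul]; gcongr; exact hC₀ x) (hC₁ x))⟩
  have hlim : Tendsto (fun x : ℝ => -cexp (-μ * (x - x₀)) * (μ * f x + f' x)) atTop (𝓝 0) := by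
    have := (tendsto_cexp_neg_mul_sub_atTop hμ x₀).neg
    rw [neg_zero] at this
    exact this.zero_mul_isBoundedUnder_le hbdd
  rw [setIntegral_congr_fun measurableSet_Ioi habs,
    integral_Ioi_of_hasDerivAt_of_tendsto' (fun x _ => hderiv x)
      (hint.integrableOn.congr_fun habs measurableSet_Ioi) hlim]
  simp

lemma integral_Iic_cexp_neg_mul_abs_sub_mul_sq_sub {f f' f'' : ℝ → ℂ} {C₀ C₁ C₂ : ℝ}
    (hμ : 0 < μ.re) (hf : ∀ x, HasDerivAt f (f' x) x) (hf' : ∀ x, HasDerivAt f' (f'' x) x)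
    (hf''c : Continuous f'') (hC₀ : ∀ x, ‖f x‖ ≤ C₀) (hC₁ : ∀ x, ‖f' x‖ ≤ C₁)
    (hC₂ : ∀ x, ‖f'' x‖ ≤ C₂) (x₀ : ℝ) :
    ∫ x in Iic x₀, cexp (-μ * |x - x₀|) * (μ ^ 2 * f x - f'' x) = μ * f x₀ - f' x₀ := by
  have hreflected := integral_Ioi_cexp_neg_mul_abs_sub_mul_sq_sub (f := fun x => f (-x))
    (f' := fun x => -f' (-x)) (f'' := fun x => f'' (-x)) hμ
    (fun x => ((hf (-x)).scomp x (hasDerivAt_neg x)).congr_deriv (by simp))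
    (fun x => ((hf' (-x)).scomp x (hasDerivAt_neg x)).neg.congr_deriv (by simp))
    (hf''c.comp continuous_neg) (fun x => hC₀ (-x)) (fun x => by simpa using hC₁ (-x))
    (fun x => hC₂ (-x)) (-x₀)
  rw [← neg_neg x₀, ← integral_comp_neg_Ioi]
  convert hreflected using 4 with x
  · rw [show -x - - -x₀ = -(x - -x₀) by ring, abs_neg]
  · simp [sub_eq_add_neg]

theorem integral_cexp_neg_mul_abs_sub_mul_sq_sub {f f' f'' : ℝ → ℂ} {C₀ C₁ C₂ : ℝ}
    (hμ : 0 < μ.re) (hf : ∀ x, HasDerivAt f (f' x) x) (hf' : ∀ x, HasDerivAt f' (f'' x) x)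
    (hf''c : Continuous f'') (hC₀ : ∀ x, ‖f x‖ ≤ C₀) (hC₁ : ∀ x, ‖f' x‖ ≤ C₁)
    (hC₂ : ∀ x, ‖f'' x‖ ≤ C₂) (x₀ : ℝ) :
    ∫ x, cexp (-μ * |x - x₀|) * (μ ^ 2 * f x - f'' x) = 2 * μ * f x₀ := by
  have hint := integrable_cexp_neg_mul_abs_sub_mul_sq_sub hμ hf hf''c hC₀ hC₂ x₀
  rw [← intervalIntegral.integral_Iic_add_Ioi hint.integrableOn hint.integrableOn,
    integral_Iic_cexp_neg_mul_abs_sub_mul_sq_sub hμ hf hf' hf''c hC₀ hC₁ hC₂,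
    integral_Ioi_cexp_neg_mul_abs_sub_mul_sq_sub hμ hf hf' hf''c hC₀ hC₁ hC₂]
  ring

theorem SchwartzMap.integral_cexp_neg_mul_abs_sub_mul_sq_sub_deriv_deriv (ψ : 𝓢(ℝ, ℂ))
    (hμ : 0 < μ.re) (x₀ : ℝ) :
    ∫ x, cexp (-μ * |x - x₀|) * (μ ^ 2 * ψ x - deriv (deriv ψ) x) = 2 * μ * ψ x₀ :=
  integral_cexp_neg_mul_abs_sub_mul_sq_sub hμ ψ.hasDerivAt (derivCLM ℝ ℂ ψ).hasDerivAt
    (derivCLM ℝ ℂ (derivCLM ℝ ℂ ψ)).continuous (ψ.norm_le_seminorm ℝ)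
    ((derivCLM ℝ ℂ ψ).norm_le_seminorm ℝ) ((derivCLM ℝ ℂ (derivCLM ℝ ℂ ψ)).norm_le_seminorm ℝ) x₀

end

/-- Biorthogonality `⟨η_{x₀}, η^{y₀}⟩ = δ(x₀ - y₀)` in the second example, smeared against
a test function `ψ`: with `λ = (√2/2)(1+i)`, `c = i/(√2(1+i))`, `η_{x₀}(x) = c e^{-λ|x-x₀|}`
and `η^{y₀} = ξ_{y₀} - i ξ''_{y₀}`, one has
`∫ conj(c) e^{-conj(λ)|x-x₀|} (ψ(x) - i ψ''(x)) dx = ψ(x₀)`. -/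
theorem statement17 (l c : ℂ)
    (hl : l = (Real.sqrt 2 / 2 : ℝ) * (1 + Complex.I))
    (hc : c = Complex.I / ((Real.sqrt 2 : ℝ) * (1 + Complex.I))) :
    ∀ (ψ : SchwartzMap ℝ ℂ) (x₀ : ℝ),
      ∫ x : ℝ, (starRingEnd ℂ) c * Complex.exp (-(starRingEnd ℂ) l * ((|x - x₀| : ℝ) : ℂ))
          * (ψ x - Complex.I * deriv (deriv (⇑ψ)) x) = ψ x₀ := by
  intro ψ x₀
  have hsqrt : ((√2 : ℝ) : ℂ) ^ 2 = 2 := by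
    rw [← ofReal_pow, Real.sq_sqrt zero_le_two, ofReal_ofNat]
  have hμ : conj l = ((√2 / 2 : ℝ) : ℂ) * (1 - I) := by
    rw [hl, map_mul, conj_ofReal, map_add, map_one, conj_I, sub_eq_add_neg]
  have hμre : 0 < (conj l).re := by
    rw [hμ]; simp
  have hμsq : conj l ^ 2 = -I := by
    rw [hμ]; push_cast
    linear_combination (1 - I) ^ 2 / 4 * hsqrt + I_sq / 2
  have hnorm : conj c * I * (2 * conj l) = 1 := by
    have h1I : (1 - I) ≠ 0 := fun h => by simpa using congrArg re h
    rw [hc, hμ, map_div₀, map_mul, conj_ofReal, map_add, map_one, conj_I, ← sub_eq_add_neg]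
    push_cast
    field_simp
    linear_combination -I_sq
  calc _ = conj c * I * ∫ x : ℝ, cexp (-conj l * |x - x₀|) *
          (conj l ^ 2 * ψ x - deriv (deriv ψ) x) := by
        rw [← integral_const_mul]
        congr 1 with x
        rw [hμsq]
        linear_combination conj c * cexp (-conj l * |x - x₀|) * ψ x * I_sq
    _ = ψ x₀ := by
        rw [ψ.integral_cexp_neg_mul_abs_sub_mul_sq_sub_deriv_deriv hμre]
        linear_combination ψ x₀ * hnorm
end

section
/- Let λ = (√2/2)(1 + i) and c = i/(√2 (1 + i)). Then for all φ, ψ ∈ 𝓢(ℝ,ℂ): ∫_ℝ ( c ∫_ℝ conj(φ(x - s)) e^{-λ |s|} ds ) · (ψ(x) + i ψ''(x)) dx = ∫_ℝ conj(φ(x)) ψ(x) dx. (This is the resolution of the identity ∫ dx₀ ⟨φ, η_{x₀}⟩ ⟨η^{x₀}, ψ⟩ = ⟨φ, ψ⟩, i.e., ⟨T† φ, T⁻¹ ψ⟩ = ⟨φ, ψ⟩, for the second example.) -/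
/-!
The kernel `G(x) = c e^{-λ|x|}` is the fundamental solution of `1 + i d²/dx²`: since `λ² = i`,
on each half-line `e^{-λ|x|}` solves the homogeneous equation, and `c` is chosen so that the jump
`-2λ c` of `G'` at the origin makes `i G'' = δ - G`. Hence `∫ G(x - u) (ψ + iψ'')(x) dx = ψ(u)`,
which is checked by integrating exactly on each half-line, and the theorem follows by Fubini.
-/

open Complex ComplexConjugate Filter MeasureTheory Set Topology

lemma norm_cexp_neg_mul_ofReal_le_one {l : ℂ} (hl : 0 ≤ l.re) {r : ℝ} (hr : 0 ≤ r) :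
    ‖cexp (-l * r)‖ ≤ 1 := by
  rw [norm_exp, Real.exp_le_one_iff]
  simpa using mul_nonneg hl hr

lemma MeasureTheory.Integrable.cexp_neg_mul_ofReal_mul {α : Type*} [MeasurableSpace α]
    {μ : Measure α} {l : ℂ} (hl : 0 ≤ l.re) {r : α → ℝ} (hr : Measurable r) (hr0 : ∀ᵐ x ∂μ, 0 ≤ r x)
    {f : α → ℂ} (hf : Integrable f μ) :
    Integrable (fun x => cexp (-l * r x) * f x) μ :=
  hf.bdd_mul (by fun_prop) (hr0.mono fun _ hx => norm_cexp_neg_mul_ofReal_le_one hl hx)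

lemma integral_Ioi_cexp_neg_mul_sub {l : ℂ} (hl : 0 ≤ l.re) {f g : ℝ → ℂ} (hf : Integrable f)
    (hg : ∀ x, HasDerivAt g (l * g x + f x) x) (hg_top : Tendsto g atTop (𝓝 0)) (u : ℝ) :
    ∫ x in Ioi u, cexp (-l * (x - u : ℝ)) * f x = -g u := by
  have hderiv : ∀ x, HasDerivAt (fun x : ℝ => cexp (-l * (x - u : ℝ)) * g x)
      (cexp (-l * (x - u : ℝ)) * f x) x := fun x => by
    have hexp : HasDerivAt (fun x : ℝ => cexp (-l * (x - u : ℝ))) (cexp (-l * (x - u : ℝ)) * -l) x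
        := by simpa using (((hasDerivAt_id x).sub_const u).ofReal_comp.const_mul (-l)).cexp
    exact (hexp.mul (hg x)).congr_deriv (by ring)
  have hbdd : ∀ᶠ x in atTop, ‖cexp (-l * (x - u : ℝ))‖ ≤ 1 :=
    eventually_ge_atTop u |>.mono fun x hx => norm_cexp_neg_mul_ofReal_le_one hl (sub_nonneg.2 hx)
  have hlim : Tendsto (fun x : ℝ => cexp (-l * (x - u : ℝ)) * g x) atTop (𝓝 0) :=
    isBoundedUnder_le_mul_tendsto_zero ⟨1, hbdd⟩ hg_top
  have hint : IntegrableOn (fun x : ℝ => cexp (-l * (x - u : ℝ)) * f x) (Ioi u) :=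
    (hf.restrict.cexp_neg_mul_ofReal_mul hl (by fun_prop)
      ((ae_restrict_iff' measurableSet_Ioi).2 (ae_of_all _ fun _ hx => sub_nonneg.2 hx.le)))
  rw [integral_Ioi_of_hasDerivAt_of_tendsto' (fun x _ => hderiv x) hint hlim]
  simp

lemma integral_Iic_cexp_neg_mul_sub {l : ℂ} (hl : 0 ≤ l.re) {f g : ℝ → ℂ} (hf : Integrable f)
    (hg : ∀ x, HasDerivAt g (-l * g x + f x) x) (hg_bot : Tendsto g atBot (𝓝 0)) (u : ℝ) :
    ∫ x in Iic u, cexp (-l * (u - x : ℝ)) * f x = g u := by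
  have hderiv : ∀ x, HasDerivAt (fun x : ℝ => cexp (-l * (u - x : ℝ)) * g x)
      (cexp (-l * (u - x : ℝ)) * f x) x := fun x => by
    have hexp : HasDerivAt (fun x : ℝ => cexp (-l * (u - x : ℝ))) (cexp (-l * (u - x : ℝ)) * l) x
        := by simpa using (((hasDerivAt_id x).const_sub u).ofReal_comp.const_mul (-l)).cexp
    exact (hexp.mul (hg x)).congr_deriv (by ring)
  have hbdd : ∀ᶠ x in atBot, ‖cexp (-l * (u - x : ℝ))‖ ≤ 1 :=
    eventually_le_atBot u |>.mono fun x hx => norm_cexp_neg_mul_ofReal_le_one hl (sub_nonneg.2 hx)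
  have hlim : Tendsto (fun x : ℝ => cexp (-l * (u - x : ℝ)) * g x) atBot (𝓝 0) :=
    isBoundedUnder_le_mul_tendsto_zero ⟨1, hbdd⟩ hg_bot
  have hint : IntegrableOn (fun x : ℝ => cexp (-l * (u - x : ℝ)) * f x) (Iic u) :=
    (hf.restrict.cexp_neg_mul_ofReal_mul hl (by fun_prop)
      ((ae_restrict_iff' measurableSet_Iic).2 (ae_of_all _ fun _ hx => sub_nonneg.2 hx)))
  rw [integral_Iic_of_hasDerivAt_of_tendsto' (fun x _ => hderiv x) hint hlim]
  simp

lemma SchwartzMap.integrable_deriv_deriv {F : Type*} [NormedAddCommGroup F] [NormedSpace ℝ F]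
    (f : SchwartzMap ℝ F) : Integrable (deriv (deriv f)) :=
  (derivCLM ℝ F (derivCLM ℝ F f)).integrable

lemma integral_cexp_neg_mul_abs_sub_mul_add_I_mul_deriv_deriv {l : ℂ} (hl2 : l ^ 2 = I)
    (hl : 0 ≤ l.re) (ψ : SchwartzMap ℝ ℂ) (u : ℝ) :
    ∫ x, cexp (-l * (|x - u| : ℝ)) * (ψ x + I * deriv (deriv ψ) x) = -(2 * I * l) * ψ u := by
  set f : ℝ → ℂ := fun x => ψ x + I * deriv (deriv ψ) x
  have hf : Integrable f := ψ.integrable.add (ψ.integrable_deriv_deriv.const_mul I)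
  have hψ : ∀ x, HasDerivAt ψ (deriv ψ x) x := ψ.hasDerivAt
  have hψ' : ∀ x, HasDerivAt (deriv ψ) (deriv (deriv ψ) x) x :=
    (SchwartzMap.derivCLM ℝ ℂ ψ).hasDerivAt
  have hψ_top : Tendsto ψ atTop (𝓝 0) := ψ.tendsto_cocompact.mono_left atTop_le_cocompact
  have hψ_bot : Tendsto ψ atBot (𝓝 0) := ψ.tendsto_cocompact.mono_left atBot_le_cocompact
  have hψ'_top : Tendsto (deriv ψ) atTop (𝓝 0) :=
    (SchwartzMap.derivCLM ℝ ℂ ψ).tendsto_cocompact.mono_left atTop_le_cocompact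
  have hψ'_bot : Tendsto (deriv ψ) atBot (𝓝 0) :=
    (SchwartzMap.derivCLM ℝ ℂ ψ).tendsto_cocompact.mono_left atBot_le_cocompact
  -- `g₊ = i(λψ + ψ')` and `g₋ = i(ψ' - λψ)` solve `g₊' = λ g₊ + f`, `g₋' = -λ g₋ + f` as `iλ² = -1`.
  have hIoi : ∫ x in Ioi u, cexp (-l * (x - u : ℝ)) * f x = -(I * (l * ψ u + deriv ψ u)) := by
    refine integral_Ioi_cexp_neg_mul_sub (g := fun x => I * (l * ψ x + deriv ψ x)) hl hf
      (fun x => ?_) ?_ u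
    · exact (((hψ x).const_mul l).add (hψ' x)).const_mul I |>.congr_deriv
        (by linear_combination (-I * ψ x) * hl2 - ψ x * I_sq)
    · simpa using ((hψ_top.const_mul l).add hψ'_top).const_mul I
  have hIic : ∫ x in Iic u, cexp (-l * (u - x : ℝ)) * f x = I * (deriv ψ u - l * ψ u) := by
    refine integral_Iic_cexp_neg_mul_sub (g := fun x => I * (deriv ψ x - l * ψ x)) hl hf
      (fun x => ?_) ?_ u
    · exact ((hψ' x).sub ((hψ x).const_mul l)).const_mul I |>.congr_deriv
        (by linear_combination (-I * ψ x) * hl2 - ψ x * I_sq)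
    · simpa using (hψ'_bot.sub (hψ_bot.const_mul l)).const_mul I
  have hint : Integrable fun x => cexp (-l * (|x - u| : ℝ)) * f x :=
    hf.cexp_neg_mul_ofReal_mul hl (by fun_prop) (ae_of_all _ fun _ => abs_nonneg _)
  rw [← intervalIntegral.integral_Iic_add_Ioi hint.integrableOn hint.integrableOn,
    setIntegral_congr_fun measurableSet_Iic fun x hx => by
      rw [abs_sub_comm, abs_of_nonneg (sub_nonneg.2 hx)],
    setIntegral_congr_fun measurableSet_Ioi fun x hx => by rw [abs_of_pos (sub_pos.2 hx)],
    hIic, hIoi]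
  ring

lemma integral_integral_mul_cexp_neg_mul_abs_sub_swap {l : ℂ} (hl : 0 ≤ l.re) {f h : ℝ → ℂ}
    (hf : Integrable f) (hh : Integrable h) :
    ∫ x, (∫ v, f v * cexp (-l * (|x - v| : ℝ))) * h x
      = ∫ v, f v * ∫ x, cexp (-l * (|x - v| : ℝ)) * h x := by
  have hprod : Integrable (fun p : ℝ × ℝ => cexp (-l * (|p.1 - p.2| : ℝ)) * (h p.1 * f p.2))
      (volume.prod volume) :=
    (hh.mul_prod hf).cexp_neg_mul_ofReal_mul hl (by fun_prop) (ae_of_all _ fun _ => abs_nonneg _)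
  calc ∫ x, (∫ v, f v * cexp (-l * (|x - v| : ℝ))) * h x
      = ∫ x, ∫ v, cexp (-l * (|x - v| : ℝ)) * (h x * f v) := by
        congr 1 with x
        rw [← integral_mul_const]
        congr 1 with v
        ring
    _ = ∫ v, ∫ x, cexp (-l * (|x - v| : ℝ)) * (h x * f v) := integral_integral_swap hprod
    _ = ∫ v, f v * ∫ x, cexp (-l * (|x - v| : ℝ)) * h x := by
        congr 1 with v
        rw [← integral_const_mul]
        congr 1 with x
        ring

lemma sqrt_two_div_two_mul_one_add_I_sq : (((Real.sqrt 2 / 2 : ℝ) : ℂ) * (1 + I)) ^ 2 = I := by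
  have hsqrt : ((Real.sqrt 2 : ℝ) : ℂ) ^ 2 = 2 := by norm_cast; simp
  push_cast
  linear_combination (1 + I) ^ 2 / 4 * hsqrt + 1 / 2 * I_sq

lemma I_div_sqrt_two_mul_one_add_I_mul_neg_two_I_mul :
    I / ((Real.sqrt 2 : ℝ) * (1 + I)) * -(2 * I * (((Real.sqrt 2 / 2 : ℝ) : ℂ) * (1 + I))) = 1 := by
  have hsqrt0 : ((Real.sqrt 2 : ℝ) : ℂ) ≠ 0 := by norm_cast; positivity
  have hI : (1 + I) ≠ 0 := fun h => by simpa using congrArg re h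
  field_simp
  push_cast
  linear_combination -(Real.sqrt 2 : ℂ) * I_sq

/-- Resolution of the identity `∫ dx₀ ⟨φ, η_{x₀}⟩⟨η^{x₀}, ψ⟩ = ⟨φ, ψ⟩`, i.e.
`⟨T† φ, T⁻¹ ψ⟩ = ⟨φ, ψ⟩`, in the second example: with `λ = (√2/2)(1+i)`,
`c = i/(√2(1+i))`, `T⁻¹ψ = ψ + iψ''` and `conj((T†φ)(x)) = c ∫ conj(φ(x-s)) e^{-λ|s|} ds`,
one has `∫ (c ∫ conj(φ(x-s)) e^{-λ|s|} ds)(ψ(x) + iψ''(x)) dx = ∫ conj(φ(x)) ψ(x) dx`. -/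
theorem statement18 (l c : ℂ)
    (hl : l = (Real.sqrt 2 / 2 : ℝ) * (1 + Complex.I))
    (hc : c = Complex.I / ((Real.sqrt 2 : ℝ) * (1 + Complex.I))) :
    ∀ φ ψ : SchwartzMap ℝ ℂ,
      ∫ x : ℝ,
          (c * ∫ s : ℝ, (starRingEnd ℂ) (φ (x - s)) * Complex.exp (-l * ((|s| : ℝ) : ℂ)))
            * (ψ x + Complex.I * deriv (deriv (⇑ψ)) x)
        = ∫ x : ℝ, (starRingEnd ℂ) (φ x) * ψ x := by
  have hl2 : l ^ 2 = I := hl ▸ sqrt_two_div_two_mul_one_add_I_sq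
  have hre : 0 ≤ l.re := by
    rw [hl, re_ofReal_mul, add_re, one_re, I_re, add_zero, mul_one]; positivity
  have hc2 : c * -(2 * I * l) = 1 := hl ▸ hc ▸ I_div_sqrt_two_mul_one_add_I_mul_neg_two_I_mul
  intro φ ψ
  have hφ : Integrable fun v => conj (φ v) :=
    conjCLE.toContinuousLinearMap.integrable_comp φ.integrable
  have hψ : Integrable fun x => ψ x + I * deriv (deriv ψ) x :=
    ψ.integrable.add (ψ.integrable_deriv_deriv.const_mul I)
  have hconv : ∀ x : ℝ, ∫ s, conj (φ (x - s)) * cexp (-l * ((|s| : ℝ) : ℂ))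
      = ∫ v, conj (φ v) * cexp (-l * ((|x - v| : ℝ) : ℂ)) := fun x => by
    rw [← integral_sub_left_eq_self _ volume x]
    simp
  simp_rw [hconv, mul_assoc, integral_const_mul]
  rw [integral_integral_mul_cexp_neg_mul_abs_sub_swap hre hφ hψ, ← integral_const_mul]
  congr 1 with v
  rw [integral_cexp_neg_mul_abs_sub_mul_add_I_mul_deriv_deriv hl2 hre]
  linear_combination (conj (φ v) * ψ v) * hc2
end

section
/- Let λ = (√2/2)(1 + i) and c = i/(√2 (1 + i)). Then for every ψ ∈ 𝓢(ℝ,ℂ) and every x₀ ∈ ℝ: ∫_ℝ conj(c) e^{-conj(λ) |x - x₀|} ( x ψ(x) - i (d²/dx²)(x ψ(x)) ) dx = x₀ · ψ(x₀). (This expresses the eigenvalue equation q̂ η_{x₀} = x₀ η_{x₀} for the eigenfunction η_{x₀}(x) = c e^{-λ|x-x₀|} of the deformed position operator q̂ = T q̂₀ T⁻¹: pairing η_{x₀} with q̂† φ = (T⁻¹)†(q̂₀(T† φ)) and substituting ψ = T† φ yields exactly this identity.) -/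
/-!
Write `Φ x = x ψ x` and `μ = conj λ`, so that `μ² = -i` and the integrand is
`-i conj(c) e^{-μ|x-x₀|} (Φ'' - μ² Φ)`. Since `e^{-μ|x-x₀|}/(-2μ)` is the Green's function of
`d²/dx² - μ²` (for `Re μ ≥ 0`), integrating by parts on each half-line gives
`∫ e^{-μ|x-x₀|} (Φ'' - μ² Φ) = -2μ Φ(x₀)`, and `c` is normalised by `conj c · 2iμ = 1`.
-/

open MeasureTheory Filter Complex Set
open scoped SchwartzMap Topology

namespace SchwartzMap

variable {F : Type*} [NormedAddCommGroup F] [NormedSpace ℝ F] (f : 𝓢(ℝ, F))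

theorem tendsto_atTop_zero : Tendsto f atTop (𝓝 0) :=
  f.tendsto_cocompact.mono_left atTop_le_cocompact

theorem tendsto_atBot_zero : Tendsto f atBot (𝓝 0) :=
  f.tendsto_cocompact.mono_left atBot_le_cocompact

theorem coe_derivCLM : ⇑(derivCLM ℝ F f) = deriv f :=
  funext (derivCLM_apply ℝ f)

theorem differentiable_deriv : Differentiable ℝ (deriv f) :=
  f.coe_derivCLM ▸ (derivCLM ℝ F f).differentiable

theorem tendsto_deriv_atTop_zero : Tendsto (deriv f) atTop (𝓝 0) :=
  f.coe_derivCLM ▸ (derivCLM ℝ F f).tendsto_atTop_zero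

theorem tendsto_deriv_atBot_zero : Tendsto (deriv f) atBot (𝓝 0) :=
  f.coe_derivCLM ▸ (derivCLM ℝ F f).tendsto_atBot_zero

theorem integrable_deriv_deriv_s19 : Integrable (deriv (deriv f)) :=
  f.coe_derivCLM ▸ (derivCLM ℝ F f).coe_derivCLM ▸ (derivCLM ℝ F (derivCLM ℝ F f)).integrable

end SchwartzMap

theorem norm_cexp_le_one {z : ℂ} (hz : z.re ≤ 0) : ‖cexp z‖ ≤ 1 := by
  rw [norm_exp]
  exact Real.exp_le_one_iff.mpr hz

theorem integrable_cexp_neg_mul_abs_sub_mul {f : ℝ → ℂ} (hf : Integrable f) {μ : ℂ}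
    (hμ : 0 ≤ μ.re) (a : ℝ) : Integrable fun x : ℝ => cexp (-μ * |x - a|) * f x := by
  refine hf.bdd_mul (c := 1) (by fun_prop) (Eventually.of_forall fun x => norm_cexp_le_one ?_)
  simp only [neg_mul, neg_re, mul_re, ofReal_re, ofReal_im, mul_zero, sub_zero, neg_nonpos]
  exact mul_nonneg hμ (abs_nonneg _)

theorem hasDerivAt_cexp_mul_sub_mul_deriv_sub {Φ : ℝ → ℂ} (hΦ : Differentiable ℝ Φ)
    (hΦ' : Differentiable ℝ (deriv Φ)) (ν : ℂ) (a x : ℝ) :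
    HasDerivAt (fun x : ℝ => cexp (ν * (x - a)) * (deriv Φ x - ν * Φ x))
      (cexp (ν * (x - a)) * (deriv (deriv Φ) x - ν ^ 2 * Φ x)) x := by
  have hexp : HasDerivAt (fun x : ℝ => cexp (ν * (x - a))) (ν * cexp (ν * (x - a))) x := by
    simpa [mul_comm] using (((hasDerivAt_id x).ofReal_comp.sub_const (a : ℂ)).const_mul ν).cexp
  refine (hexp.mul ((hΦ' x).hasDerivAt.sub ((hΦ x).hasDerivAt.const_mul ν))).congr_deriv ?_
  simp only [Pi.sub_apply]
  ring

theorem tendsto_cexp_mul_sub_mul_zero {g : ℝ → ℂ} {l : Filter ℝ} (hg : Tendsto g l (𝓝 0))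
    {ν : ℂ} {a : ℝ} (hν : ∀ᶠ x in l, ν.re * (x - a) ≤ 0) :
    Tendsto (fun x : ℝ => cexp (ν * (x - a)) * g x) l (𝓝 0) := by
  refine isBoundedUnder_le_mul_tendsto_zero ⟨1, eventually_map.mpr (hν.mono fun x hx => ?_)⟩ hg
  refine norm_cexp_le_one ?_
  simpa [mul_re] using hx

section GreenFunction

variable (Φ : 𝓢(ℝ, ℂ)) {μ : ℂ} (a : ℝ)

theorem integrable_cexp_neg_mul_abs_sub_mul_deriv_deriv_sub (hμ : 0 ≤ μ.re) :
    Integrable fun x : ℝ => cexp (-μ * |x - a|) * (deriv (deriv Φ) x - μ ^ 2 * Φ x) :=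
  integrable_cexp_neg_mul_abs_sub_mul
    (Φ.integrable_deriv_deriv_s19.sub (Φ.integrable.const_mul (μ ^ 2))) hμ a

theorem integral_Ioi_cexp_neg_mul_abs_sub_mul_deriv_deriv_sub (hμ : 0 ≤ μ.re) :
    ∫ x in Ioi a, cexp (-μ * |x - a|) * (deriv (deriv Φ) x - μ ^ 2 * Φ x)
      = -(deriv Φ a + μ * Φ a) := by
  have hside : EqOn (fun x : ℝ => cexp (-μ * |x - a|) * (deriv (deriv Φ) x - μ ^ 2 * Φ x))
      (fun x : ℝ => cexp (-μ * (x - a)) * (deriv (deriv Φ) x - (-μ) ^ 2 * Φ x)) (Ioi a) := by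
    intro x (hx : a < x)
    simp only [abs_of_pos (sub_pos.mpr hx), neg_sq, ofReal_sub]
  have hlim : Tendsto (fun x => deriv Φ x - -μ * Φ x) atTop (𝓝 0) := by
    simpa using Φ.tendsto_deriv_atTop_zero.sub (Φ.tendsto_atTop_zero.const_mul (-μ))
  have hdecay : ∀ᶠ x in atTop, (-μ).re * (x - a) ≤ 0 := by
    filter_upwards [eventually_ge_atTop a] with x hx
    simp only [neg_re, neg_mul, neg_nonpos]
    exact mul_nonneg hμ (sub_nonneg.mpr hx)
  rw [setIntegral_congr_fun measurableSet_Ioi hside,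
    integral_Ioi_of_hasDerivAt_of_tendsto'
      (fun x _ => hasDerivAt_cexp_mul_sub_mul_deriv_sub Φ.differentiable
        Φ.differentiable_deriv (-μ) a x)
      ((integrable_cexp_neg_mul_abs_sub_mul_deriv_deriv_sub Φ a hμ).integrableOn.congr_fun
        hside measurableSet_Ioi)
      (tendsto_cexp_mul_sub_mul_zero hlim hdecay)]
  simp

theorem integral_Iic_cexp_neg_mul_abs_sub_mul_deriv_deriv_sub (hμ : 0 ≤ μ.re) :
    ∫ x in Iic a, cexp (-μ * |x - a|) * (deriv (deriv Φ) x - μ ^ 2 * Φ x)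
      = deriv Φ a - μ * Φ a := by
  have hside : EqOn (fun x : ℝ => cexp (-μ * |x - a|) * (deriv (deriv Φ) x - μ ^ 2 * Φ x))
      (fun x : ℝ => cexp (μ * (x - a)) * (deriv (deriv Φ) x - μ ^ 2 * Φ x)) (Iic a) := by
    intro x (hx : x ≤ a)
    simp only [abs_of_nonpos (sub_nonpos.mpr hx), ofReal_neg, ofReal_sub, neg_mul_neg]
  have hlim : Tendsto (fun x => deriv Φ x - μ * Φ x) atBot (𝓝 0) := by
    simpa using Φ.tendsto_deriv_atBot_zero.sub (Φ.tendsto_atBot_zero.const_mul μ)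
  have hdecay : ∀ᶠ x in atBot, μ.re * (x - a) ≤ 0 := by
    filter_upwards [eventually_le_atBot a] with x hx
    exact mul_nonpos_of_nonneg_of_nonpos hμ (sub_nonpos.mpr hx)
  rw [setIntegral_congr_fun measurableSet_Iic hside,
    integral_Iic_of_hasDerivAt_of_tendsto'
      (fun x _ => hasDerivAt_cexp_mul_sub_mul_deriv_sub Φ.differentiable
        Φ.differentiable_deriv μ a x)
      ((integrable_cexp_neg_mul_abs_sub_mul_deriv_deriv_sub Φ a hμ).integrableOn.congr_fun
        hside measurableSet_Iic)
      (tendsto_cexp_mul_sub_mul_zero hlim hdecay)]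
  simp

theorem integral_cexp_neg_mul_abs_sub_mul_deriv_deriv_sub (hμ : 0 ≤ μ.re) :
    ∫ x, cexp (-μ * |x - a|) * (deriv (deriv Φ) x - μ ^ 2 * Φ x) = -2 * μ * Φ a := by
  rw [← integral_add_compl measurableSet_Iic
      (integrable_cexp_neg_mul_abs_sub_mul_deriv_deriv_sub Φ a hμ), compl_Iic,
    integral_Iic_cexp_neg_mul_abs_sub_mul_deriv_deriv_sub Φ a hμ,
    integral_Ioi_cexp_neg_mul_abs_sub_mul_deriv_deriv_sub Φ a hμ]
  ring

end GreenFunction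

theorem conj_sqrt_two_div_two_mul_one_add_I :
    starRingEnd ℂ (((√2 / 2 : ℝ) : ℂ) * (1 + I)) = ((√2 / 2 : ℝ) : ℂ) * (1 - I) := by
  simp [map_ofNat, sub_eq_add_neg]

theorem re_sqrt_two_div_two_mul_one_sub_I_nonneg : 0 ≤ (((√2 / 2 : ℝ) : ℂ) * (1 - I)).re := by
  simp only [mul_re, ofReal_re, ofReal_im, sub_re, one_re, I_re, zero_mul, sub_zero]
  positivity

theorem sqrt_two_div_two_mul_one_sub_I_sq : (((√2 / 2 : ℝ) : ℂ) * (1 - I)) ^ 2 = -I := by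
  have hsqrt : ((√2 : ℝ) : ℂ) ^ 2 = 2 := by norm_cast; simp
  push_cast
  linear_combination (1 - I) ^ 2 / 4 * hsqrt + I_sq / 2

theorem conj_I_div_sqrt_two_mul_one_add_I_mul :
    starRingEnd ℂ (I / ((√2 : ℝ) * (1 + I))) * (2 * I * (((√2 / 2 : ℝ) : ℂ) * (1 - I))) = 1 := by
  have hne : (1 : ℂ) - I ≠ 0 := fun h => by simpa using congrArg im h
  rw [map_div₀, map_mul, conj_I, conj_ofReal, map_add, map_one, conj_I, ← sub_eq_add_neg]
  push_cast
  field_simp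
  linear_combination -I_sq

/-- Eigenvalue equation `q̂ η_{x₀} = x₀ η_{x₀}` in the second example, tested against
`ψ = T† φ`: with `λ = (√2/2)(1+i)`, `c = i/(√2(1+i))`, and `η_{x₀}(x) = c e^{-λ|x-x₀|}`,
one has `∫ conj(c) e^{-conj(λ)|x-x₀|} (x ψ(x) - i (x ψ(x))'') dx = x₀ ψ(x₀)`. -/
theorem statement19 (l c : ℂ)
    (hl : l = (Real.sqrt 2 / 2 : ℝ) * (1 + Complex.I))
    (hc : c = Complex.I / ((Real.sqrt 2 : ℝ) * (1 + Complex.I))) :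
    ∀ (ψ : SchwartzMap ℝ ℂ) (x₀ : ℝ),
      ∫ x : ℝ, (starRingEnd ℂ) c * Complex.exp (-(starRingEnd ℂ) l * ((|x - x₀| : ℝ) : ℂ))
          * ((x : ℂ) * ψ x
              - Complex.I * deriv (deriv (fun t : ℝ => (t : ℂ) * ψ t)) x)
        = (x₀ : ℂ) * ψ x₀ := by
  intro ψ x₀
  rw [hl, conj_sqrt_two_div_two_mul_one_add_I]
  set μ : ℂ := ((√2 / 2 : ℝ) : ℂ) * (1 - I)
  have hcμ : starRingEnd ℂ c * (2 * I * μ) = 1 := hc ▸ conj_I_div_sqrt_two_mul_one_add_I_mul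
  set Φ : 𝓢(ℝ, ℂ) := SchwartzMap.smulLeftCLM ℂ (fun t : ℝ => (t : ℂ)) ψ
  have hΦ : ⇑Φ = fun t : ℝ => (t : ℂ) * ψ t := by
    rw [SchwartzMap.smulLeftCLM_apply (g := fun t : ℝ => (t : ℂ)) ofRealCLM.hasTemperateGrowth]
    rfl
  have hintegrand : ∀ x : ℝ,
      starRingEnd ℂ c * cexp (-μ * |x - x₀|) * (x * ψ x - I * deriv (deriv Φ) x)
        = -I * starRingEnd ℂ c * (cexp (-μ * |x - x₀|) * (deriv (deriv Φ) x - μ ^ 2 * Φ x)) := by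
    intro x
    rw [sqrt_two_div_two_mul_one_sub_I_sq, hΦ]
    linear_combination starRingEnd ℂ c * cexp (-μ * |x - x₀|) * x * ψ x * I_sq
  rw [← hΦ, funext hintegrand, integral_const_mul,
    integral_cexp_neg_mul_abs_sub_mul_deriv_deriv_sub Φ x₀
      re_sqrt_two_div_two_mul_one_sub_I_nonneg, hΦ]
  linear_combination (x₀ * ψ x₀ : ℂ) * hcμ
end
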